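/- Let d be an odd positive integer. For all n ≥ 0, Ch_{n,λ}(d) + Ch_{n,λ}(0) = 2·Σ_{a=0}^{d-1} Σ_{m=0}^{n} (-1)^a (a)_{m,λ} S₁(n,m). -/

import Mathlib

/-! Writing `u = (1+λt)^{1/λ}`, the series `(1+λt)^{x/λ}` equals `u^x` for natural `x`, by the
Vandermonde identity for `(x)_{n,λ}`. So the exponential generating function of
`E_{n,λ}(d) + E_{n,λ}(0)` is `2 (u^d + 1) / (u + 1)`, which for odd `d` is the geometric sum
`2 Σ_{a<d} (-u)^a`, with coefficients `2 Σ_{a<d} (-1)^a (a)_{n,λ}`. Summing against `S₁(n,m)`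
gives the identity for `Ch_{n,λ}`. -/

open Finset PowerSeries

/-- The degenerate falling factorial `(x)_{n,λ}`. -/
noncomputable def df (l x : ℚ) (n : ℕ) : ℚ := ∏ i ∈ Finset.range n, (x - (i : ℚ) * l)

/-- The formal power series `(1+λt)^{x/λ} := Σ (x)_{n,λ} tⁿ/n!`. -/
noncomputable def B (l x : ℚ) : PowerSeries ℚ :=
  PowerSeries.mk fun n => df l x n / n.factorial

/-- Signed Stirling numbers of the first kind. -/
def S1 : ℕ → ℕ → ℚ
  | 0, 0 => 1
  | 0, _ + 1 => 0
  | _ + 1, 0 => 0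
  | n + 1, k + 1 => S1 n k - (n : ℚ) * S1 n (k + 1)

/-- Stirling numbers of the second kind. -/
def S2 : ℕ → ℕ → ℚ
  | 0, 0 => 1
  | 0, _ + 1 => 0
  | _ + 1, 0 => 0
  | n + 1, k + 1 => ((k : ℚ) + 1) * S2 n (k + 1) + S2 n k

/-- Degenerate Changhee polynomials of the second kind, built from a family `E`
(intended: Carlitz degenerate Euler polynomials): `Ch_{n,λ}(x) = Σ_{l≤n} S₁(n,l) E_{l,λ}(x)`. -/
noncomputable def Ch (E : ℕ → ℚ → ℚ) (n : ℕ) (x : ℚ) : ℚ :=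
  ∑ m ∈ Finset.range (n + 1), S1 n m * E m x

open scoped Nat

theorem df_succ (l x : ℚ) (n : ℕ) : df l x (n + 1) = df l x n * (x - n * l) :=
  prod_range_succ _ _

theorem df_add (l x y : ℚ) (n : ℕ) :
    df l (x + y) n = ∑ ij ∈ antidiagonal n, n.choose ij.1 * (df l x ij.1 * df l y ij.2) := by
  induction n with
  | zero => simp [df]
  | succ n ih =>
    rw [sum_antidiagonal_choose_succ_mul (fun i j => df l x i * df l y j), df_succ, ih, sum_mul,
      ← sum_add_distrib]
    refine sum_congr rfl fun ⟨i, j⟩ hij => ?_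
    obtain rfl : i + j = n := mem_antidiagonal.mp hij
    rw [← Nat.choose_symm_add, df_succ, df_succ]
    push_cast
    ring

theorem coeff_B (l x : ℚ) (n : ℕ) : coeff n (B l x) = df l x n / n ! :=
  coeff_mk _ _

theorem B_add (l x y : ℚ) : B l (x + y) = B l x * B l y := by
  ext n
  rw [coeff_mul, coeff_B, df_add, sum_div]
  refine sum_congr rfl fun ⟨i, j⟩ hij => ?_
  obtain rfl : i + j = n := mem_antidiagonal.mp hij
  rw [coeff_B, coeff_B, Nat.cast_add_choose]
  field_simp

theorem B_zero (l : ℚ) : B l 0 = 1 := by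
  ext (_ | n) <;> simp [coeff_B, df, prod_range_succ']

theorem B_natCast (l : ℚ) (d : ℕ) : B l d = B l 1 ^ d := by
  induction d with
  | zero => simpa using B_zero l
  | succ d ih => rw [Nat.cast_succ, B_add, ih, pow_succ]

theorem B_one_add_one_ne_zero (l : ℚ) : B l 1 + 1 ≠ 0 := by
  intro h
  simpa [B, df, constantCoeff_mk] using congrArg constantCoeff h

theorem euler_natCast_add_euler_zero (l : ℚ) {d : ℕ} (hd : Odd d) (E : ℕ → ℚ → ℚ)
    (hE : ∀ x : ℚ, (PowerSeries.mk fun n => E n x / n.factorial) * (B l 1 + 1) = 2 * B l x)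
    (m : ℕ) : E m d + E m 0 = 2 * ∑ a ∈ range d, (-1) ^ a * df l a m := by
  have hgen : (PowerSeries.mk fun n => E n d / n !) + (PowerSeries.mk fun n => E n 0 / n !) =
      2 * ∑ a ∈ range d, (-B l 1) ^ a := by
    refine mul_right_cancel₀ (B_one_add_one_ne_zero l) ?_
    have hgeom := mul_neg_geom_sum (-B l 1) d
    rw [sub_neg_eq_add, hd.neg_pow, sub_neg_eq_add] at hgeom
    rw [add_mul, hE, hE, B_natCast, B_zero, mul_assoc, mul_comm _ (B l 1 + 1), add_comm (B l 1),
      hgeom]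
    ring
  have hcoeff := congrArg (coeff m) hgen
  have hterm : ∀ a : ℕ, coeff m ((-B l 1) ^ a) = (-1) ^ a * (df l a m / m !) := by
    intro a
    rw [neg_pow, ← map_one (C (R := ℚ)), ← map_neg, ← map_pow, coeff_C_mul, ← B_natCast, coeff_B]
  rw [map_add, coeff_mk, coeff_mk, ← map_ofNat C 2, coeff_C_mul, map_sum] at hcoeff
  simp only [hterm, ← mul_div_assoc, ← sum_div, ← add_div] at hcoeff
  rwa [div_left_inj' (by positivity)] at hcoeff

theorem stmt8_general (l : ℚ) (d : ℕ) (hd : Odd d) (E : ℕ → ℚ → ℚ)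
    (hE : ∀ x : ℚ, (PowerSeries.mk fun n => E n x / n.factorial) * (B l 1 + 1)
      = 2 * B l x) :
    ∀ n : ℕ, Ch E n d + Ch E n 0 =
      2 * ∑ a ∈ Finset.range d, ∑ m ∈ Finset.range (n + 1),
        (-1 : ℚ) ^ a * df l a m * S1 n m := by
  intro n
  simp only [Ch, ← sum_add_distrib, ← mul_add, euler_natCast_add_euler_zero l hd E hE, mul_sum]
  rw [sum_comm]
  exact sum_congr rfl fun _ _ => sum_congr rfl fun _ _ => by ring

/-- For odd `d ≥ 1`: `Ch_{n,λ}(d) + Ch_{n,λ}(0) = 2 Σ_{a<d} Σ_{m≤n} (-1)^a (a)_{m,λ} S₁(n,m)`. -/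
theorem stmt8 (l : ℚ) (d : ℕ) (hd0 : 0 < d) (hd : Odd d) (E : ℕ → ℚ → ℚ)
    (hE : ∀ x : ℚ, (PowerSeries.mk fun n => E n x / n.factorial) * (B l 1 + 1)
      = 2 * B l x) :
    ∀ n : ℕ, Ch E n d + Ch E n 0 =
      2 * ∑ a ∈ Finset.range d, ∑ m ∈ Finset.range (n + 1),
        (-1 : ℚ) ^ a * df l a m * S1 n m :=
  stmt8_general l d hd E hE
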